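/- Let s ∈ P_ℤ and let St_s = {A = !![a, b; c, d] ∈ SL(2, ℤ) : a·s + b = s·(c·s + d)}. Then there exists a real number φ_s > 1 such that the map sending A = !![a, b; c, d] ∈ St_s to (c·s + d)⁻² (the derivative at s of the Möbius map of A) is a group homomorphism from St_s to the multiplicative group of positive reals whose kernel is {1, −1} and whose image equals {φ_s^n : n ∈ ℤ}. Moreover φ is constant on orbits: for every B ∈ SL(2, ℤ) whose Möbius action is defined at s, φ_{B·s} = φ_s. -/

import Mathlib

noncomputable section

abbrev SL2Z := Matrix.SpecialLinearGroup (Fin 2) ℤ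

/-- The Möbius action of `A ∈ SL(2, ℤ)` on `x ∈ ℝ`. -/
def mobius (A : SL2Z) (x : ℝ) : ℝ :=
  ((A 0 0 : ℤ) * x + (A 0 1 : ℤ)) / ((A 1 0 : ℤ) * x + (A 1 1 : ℤ))

/-- The Möbius action of `A = !![a, b; c, d]` is defined at `x` if `c·x + d ≠ 0`. -/
def mobiusDefinedAt (A : SL2Z) (x : ℝ) : Prop :=
  ((A 1 0 : ℤ) : ℝ) * x + ((A 1 1 : ℤ) : ℝ) ≠ 0

/-- `x` is a fixed point of `A = !![a, b; c, d]` if `a·x + b = x·(c·x + d)`. -/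
def IsFixedPt (A : SL2Z) (x : ℝ) : Prop :=
  (A 0 0 : ℤ) * x + (A 0 1 : ℤ) = x * ((A 1 0 : ℤ) * x + (A 1 1 : ℤ))

/-- `A` is hyperbolic if `|a + d| > 2`. -/
def IsHyperbolic (A : SL2Z) : Prop := 2 < |A 0 0 + A 1 1|

/-- `P_ℤ` is the set of real fixed points of hyperbolic elements of SL(2, ℤ). -/
def PZ : Set ℝ := {x | ∃ A : SL2Z, IsHyperbolic A ∧ IsFixedPt A x}

/-- A real number is a quadratic irrational if it is irrational and of the form
`u + v·√k` with `u, v ∈ ℚ` and `k` a positive nonsquare integer. -/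
def IsQuadIrr (s : ℝ) : Prop :=
  Irrational s ∧
    ∃ (u v : ℚ) (k : ℕ), 0 < k ∧ ¬ IsSquare k ∧ s = (u : ℝ) + (v : ℝ) * Real.sqrt k

/-- The derivative at `s` of the Möbius map of `A = !![a, b; c, d]`, namely
`(c·s + d)⁻²`. -/
def mobiusDeriv (A : SL2Z) (s : ℝ) : ℝ := ((((A 1 0 : ℤ) : ℝ) * s + ((A 1 1 : ℤ) : ℝ)) ^ 2)⁻¹

/-! If `A` fixes `s`, then `(s, 1)` is an eigenvector of `A` with eigenvalue `λ_A = c·s + d`, so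
`A ↦ λ_A` is multiplicative on the stabiliser and `A ↦ λ_A⁻²` is a homomorphism to the positive
reals. As `λ_A` is a root of `X² - tr(A)·X + 1`, the value `g = λ_A⁻²` satisfies
`g + g⁻¹ = tr(A)² - 2 ∈ ℤ`, so no value lies in `(1, 2)`; a subgroup of the positive reals with such
a gap is cyclic, and it is nontrivial because a hyperbolic element has `g ≠ 1`. The fixed-point
equation of a hyperbolic element has the nonsquare discriminant `tr² - 4`, so `s` is irrational;
hence `λ_A = ±1` forces `c = 0` and then `A = ±1`. Finally, conjugation by `B` maps the stabiliser
of `s` onto that of `B·s` and preserves `λ`. -/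

open Set

def mobiusDenom (A : SL2Z) (x : ℝ) : ℝ := ((A 1 0 : ℤ) : ℝ) * x + ((A 1 1 : ℤ) : ℝ)

lemma mobiusDeriv_eq_inv_sq (A : SL2Z) (x : ℝ) :
    mobiusDeriv A x = (mobiusDenom A x ^ 2)⁻¹ := rfl

lemma SL2Z.det_eq_one (A : SL2Z) : A 0 0 * A 1 1 - A 0 1 * A 1 0 = 1 := by
  rw [← Matrix.det_fin_two]; exact A.2

lemma SL2Z.mul_apply (A B : SL2Z) (i j : Fin 2) :
    (A * B) i j = A i 0 * B 0 j + A i 1 * B 1 j := by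
  simp [Matrix.mul_apply, Fin.sum_univ_two]

section FixedPoints

variable {A B : SL2Z} {x : ℝ}

lemma isFixedPt_one (x : ℝ) : IsFixedPt 1 x := by
  simp [IsFixedPt]

lemma IsFixedPt.mul (hA : IsFixedPt A x) (hB : IsFixedPt B x) : IsFixedPt (A * B) x := by
  unfold IsFixedPt at *
  simp only [SL2Z.mul_apply, Int.cast_add, Int.cast_mul]
  linear_combination ((A 0 0 : ℝ) - x * (A 1 0 : ℝ)) * hB + ((B 1 0 : ℝ) * x + (B 1 1 : ℝ)) * hA

open Matrix in
lemma IsFixedPt.inv (hA : IsFixedPt A x) : IsFixedPt A⁻¹ x := by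
  unfold IsFixedPt at *
  simp only [SpecialLinearGroup.SL2_inv_expl, cons_val',
    cons_val_zero, cons_val_one, empty_val', cons_val_fin_one, Int.cast_neg]
  linear_combination -hA

lemma mobiusDenom_one (x : ℝ) : mobiusDenom 1 x = 1 := by
  simp [mobiusDenom]

lemma mobiusDenom_mul_of_isFixedPt (A : SL2Z) (hB : IsFixedPt B x) :
    mobiusDenom (A * B) x = mobiusDenom A x * mobiusDenom B x := by
  unfold IsFixedPt at hB
  simp only [mobiusDenom, SL2Z.mul_apply, Int.cast_add, Int.cast_mul]
  linear_combination (A 1 0 : ℝ) * hB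

lemma IsFixedPt.mobiusDenom_ne_zero (hA : IsFixedPt A x) : mobiusDenom A x ≠ 0 := by
  have h := mobiusDenom_mul_of_isFixedPt A⁻¹ hA
  rw [inv_mul_cancel, mobiusDenom_one] at h
  exact right_ne_zero_of_mul (h.symm ▸ one_ne_zero)

lemma IsFixedPt.mobiusDeriv_pos (hA : IsFixedPt A x) : 0 < mobiusDeriv A x := by
  have := hA.mobiusDenom_ne_zero
  rw [mobiusDeriv_eq_inv_sq]
  positivity

lemma mobiusDeriv_mul_of_isFixedPt (A : SL2Z) (hB : IsFixedPt B x) :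
    mobiusDeriv (A * B) x = mobiusDeriv A x * mobiusDeriv B x := by
  rw [mobiusDeriv_eq_inv_sq, mobiusDenom_mul_of_isFixedPt A hB, mul_pow, mul_inv]
  rfl

end FixedPoints

def fixedPtSubgroup (x : ℝ) : Subgroup SL2Z where
  carrier := {A | IsFixedPt A x}
  one_mem' := isFixedPt_one x
  mul_mem' := IsFixedPt.mul
  inv_mem' := IsFixedPt.inv

def mobiusDerivHom (x : ℝ) : fixedPtSubgroup x →* {r : ℝ // 0 < r} :=
  MonoidHom.mk' (fun A => ⟨mobiusDeriv A x, A.2.mobiusDeriv_pos⟩) fun A B =>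
    Subtype.ext (mobiusDeriv_mul_of_isFixedPt A B.2)

section Trace

variable {A : SL2Z} {x : ℝ}

lemma IsFixedPt.mobiusDenom_sq_add_one (hA : IsFixedPt A x) :
    mobiusDenom A x ^ 2 + 1 = ((A 0 0 + A 1 1 : ℤ) : ℝ) * mobiusDenom A x := by
  have hdet : ((A 0 0 * A 1 1 - A 0 1 * A 1 0 : ℤ) : ℝ) = 1 := by
    rw [SL2Z.det_eq_one, Int.cast_one]
  unfold IsFixedPt at hA
  push_cast [mobiusDenom] at hdet ⊢
  linear_combination (-(A 1 0 : ℝ)) * hA - hdet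

lemma IsFixedPt.mobiusDeriv_add_inv (hA : IsFixedPt A x) :
    mobiusDeriv A x + (mobiusDeriv A x)⁻¹ = (((A 0 0 + A 1 1) ^ 2 - 2 : ℤ) : ℝ) := by
  have hne := hA.mobiusDenom_ne_zero
  have htr := hA.mobiusDenom_sq_add_one
  rw [mobiusDeriv_eq_inv_sq, inv_inv]
  field_simp
  push_cast at htr ⊢
  linear_combination (mobiusDenom A x ^ 2 + 1 + ((A 0 0 : ℝ) + (A 1 1 : ℝ)) * mobiusDenom A x) * htr

lemma notMem_Ioo_one_two_of_add_inv_eq_intCast {g : ℝ} {n : ℤ} (h : g + g⁻¹ = n) :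
    g ∉ Ioo 1 2 := by
  rintro ⟨h1, h2⟩
  have hinv : g * g⁻¹ = 1 := mul_inv_cancel₀ (by positivity)
  have hlt : g⁻¹ < 1 := inv_lt_one_of_one_lt₀ h1
  have h2n : (2 : ℝ) < n := by nlinarith
  have hn3 : (n : ℝ) < 3 := by linarith
  have : (2 : ℤ) < n := by exact_mod_cast h2n
  have : n < 3 := by exact_mod_cast hn3
  omega

lemma IsFixedPt.mobiusDeriv_ne_one (hA : IsFixedPt A x) (hhyp : IsHyperbolic A) :
    mobiusDeriv A x ≠ 1 := by
  intro h
  have htr := hA.mobiusDeriv_add_inv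
  rw [h, inv_one] at htr
  have ht : (A 0 0 + A 1 1) ^ 2 - 2 = 2 := Int.cast_injective (α := ℝ) (by rw [← htr]; norm_num)
  unfold IsHyperbolic at hhyp
  nlinarith [sq_abs (A 0 0 + A 1 1)]

end Trace

lemma sq_ne_sq_sub_four {t m : ℤ} (ht : 2 < |t|) : m ^ 2 ≠ t ^ 2 - 4 := by
  intro h
  have h2 : |m| ^ 2 = |t| ^ 2 - 4 := by rw [sq_abs, sq_abs, h]
  have hm : |m| < |t| := by nlinarith [abs_nonneg m]
  nlinarith [abs_nonneg m]

lemma irrational_of_sq_eq_sq_sub_four {y : ℝ} {t : ℤ} (ht : 2 < |t|)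
    (hy : y ^ 2 = ((t ^ 2 - 4 : ℤ) : ℝ)) : Irrational y := by
  refine irrational_nrt_of_notint_nrt 2 _ hy ?_ two_pos
  rintro ⟨m, rfl⟩
  exact sq_ne_sq_sub_four ht (mod_cast hy)

lemma irrational_of_mem_PZ {s : ℝ} (hs : s ∈ PZ) : Irrational s := by
  obtain ⟨A, hhyp, hA⟩ := hs
  have hc : A 1 0 ≠ 0 := by
    intro hc
    have hdet := SL2Z.det_eq_one A
    rw [hc, mul_zero, sub_zero] at hdet
    unfold IsHyperbolic at hhyp
    rcases Int.eq_one_or_neg_one_of_mul_eq_one' hdet with ⟨ha, hd⟩ | ⟨ha, hd⟩ <;>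
      · rw [ha, hd] at hhyp; norm_num at hhyp
  have hdet : ((A 0 0 * A 1 1 - A 0 1 * A 1 0 : ℤ) : ℝ) = 1 := by
    rw [SL2Z.det_eq_one, Int.cast_one]
  have hy : ((2 * A 1 0 : ℤ) * s + (A 1 1 - A 0 0 : ℤ)) ^ 2 =
      (((A 0 0 + A 1 1) ^ 2 - 4 : ℤ) : ℝ) := by
    unfold IsFixedPt at hA
    push_cast at hdet ⊢
    linear_combination (-4 * (A 1 0 : ℝ)) * hA - 4 * hdet
  exact ((irrational_of_sq_eq_sq_sub_four hhyp hy).of_add_intCast _).of_intCast_mul _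

lemma IsFixedPt.eq_one_or_eq_neg_one {A : SL2Z} {x : ℝ} (hA : IsFixedPt A x) (hc : A 1 0 = 0) :
    A = 1 ∨ (A : Matrix (Fin 2) (Fin 2) ℤ) = -1 := by
  have hdet := SL2Z.det_eq_one A
  rw [hc, mul_zero, sub_zero] at hdet
  obtain ⟨ε, hε, ha, hd⟩ : ∃ ε : ℤ, (ε = 1 ∨ ε = -1) ∧ A 0 0 = ε ∧ A 1 1 = ε := by
    rcases Int.eq_one_or_neg_one_of_mul_eq_one' hdet with ⟨ha, hd⟩ | ⟨ha, hd⟩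
    exacts [⟨1, .inl rfl, ha, hd⟩, ⟨-1, .inr rfl, ha, hd⟩]
  have hb : A 0 1 = 0 := by
    unfold IsFixedPt at hA
    rw [ha, hd, hc, Int.cast_zero] at hA
    exact_mod_cast (by linarith : ((A 0 1 : ℤ) : ℝ) = 0)
  rcases hε with rfl | rfl
  · left
    ext i j
    fin_cases i <;> fin_cases j <;> simp [ha, hb, hc, hd]
  · right
    ext i j
    fin_cases i <;> fin_cases j <;> simp [ha, hb, hc, hd]

lemma mobiusDeriv_eq_one_iff {A : SL2Z} {x : ℝ} (hx : Irrational x) (hA : IsFixedPt A x) :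
    mobiusDeriv A x = 1 ↔ A = 1 ∨ (A : Matrix (Fin 2) (Fin 2) ℤ) = -1 := by
  constructor
  · intro h
    refine hA.eq_one_or_eq_neg_one (not_not.mp fun hc => ?_)
    rw [mobiusDeriv_eq_inv_sq, inv_eq_one, sq_eq_one_iff] at h
    have hirr : Irrational (mobiusDenom A x) := (hx.intCast_mul hc).add_intCast _
    rcases h with h | h
    · exact hirr.ne_one h
    · exact hirr.ne_int (-1) (by simpa using h)
  · rintro (rfl | h)
    · simp [mobiusDeriv]
    · have hc : A 1 0 = 0 := by simp [h]
      have hd : A 1 1 = -1 := by simp [h]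
      simp [mobiusDeriv, hc, hd]

instance : MulArchimedean {r : ℝ // 0 < r} where
  arch x y hy := by
    obtain ⟨n, hn⟩ := pow_unbounded_of_one_lt (x : ℝ) (show (1 : ℝ) < y from hy)
    exact ⟨n, Subtype.coe_le_coe.mp (by rw [Positive.val_pow]; exact hn.le)⟩

lemma Subgroup.exists_one_lt_eq_zpowers {G : Type*} [CommGroup G] [LinearOrder G]
    [IsOrderedMonoid G] [MulArchimedean G] {H : Subgroup G} (hbot : H ≠ ⊥) {a : G} (ha : 1 < a)
    (hd : Disjoint (H : Set G) (Ioo 1 a)) : ∃ b, 1 < b ∧ H = zpowers b := by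
  obtain ⟨b, hb⟩ := exists_isLeast_one_lt hbot ha hd
  exact ⟨b, hb.1.2, (cyclic_of_min hb).trans (zpowers_eq_closure b).symm⟩

def derivSet (x : ℝ) : Set ℝ := {r | ∃ A : SL2Z, IsFixedPt A x ∧ mobiusDeriv A x = r}

lemma derivSet_eq_image_range (x : ℝ) :
    derivSet x = Subtype.val '' ((mobiusDerivHom x).range : Set {r : ℝ // 0 < r}) := by
  ext r
  constructor
  · rintro ⟨A, hA, rfl⟩
    exact ⟨_, ⟨⟨A, hA⟩, rfl⟩, rfl⟩
  · rintro ⟨_, ⟨A, rfl⟩, rfl⟩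
    exact ⟨A, A.2, rfl⟩

lemma exists_derivSet_eq_zpow {s : ℝ} (hs : s ∈ PZ) :
    ∃ φ : ℝ, 1 < φ ∧ derivSet s = {r | ∃ n : ℤ, r = φ ^ n} := by
  have hbot : (mobiusDerivHom s).range ≠ ⊥ := by
    obtain ⟨M, hhyp, hM⟩ := hs
    refine (Subgroup.ne_bot_iff_exists_ne_one).mpr ⟨⟨_, ⟨M, hM⟩, rfl⟩, fun h => ?_⟩
    exact hM.mobiusDeriv_ne_one hhyp (congrArg Subtype.val (congrArg Subtype.val h))
  have hgap : Disjoint ((mobiusDerivHom s).range : Set {r : ℝ // 0 < r}) (Ioo 1 ⟨2, two_pos⟩) := by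
    refine Set.disjoint_left.mpr ?_
    rintro _ ⟨A, rfl⟩ hmem
    exact notMem_Ioo_one_two_of_add_inv_eq_intCast A.2.mobiusDeriv_add_inv hmem
  obtain ⟨φ, hφ, hrange⟩ := Subgroup.exists_one_lt_eq_zpowers hbot (show (1 : ℝ) < 2 by norm_num) hgap
  refine ⟨φ, hφ, ?_⟩
  rw [derivSet_eq_image_range, hrange]
  ext r
  constructor
  · rintro ⟨_, ⟨n, rfl⟩, rfl⟩
    exact ⟨n, Positive.coe_zpow φ n⟩
  · rintro ⟨n, rfl⟩
    exact ⟨φ ^ n, ⟨n, rfl⟩, Positive.coe_zpow φ n⟩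

section Orbit

variable {A B : SL2Z} {x : ℝ}

lemma mobiusDenom_mul (A : SL2Z) (hB : mobiusDenom B x ≠ 0) :
    mobiusDenom (A * B) x = mobiusDenom A (mobius B x) * mobiusDenom B x := by
  unfold mobiusDenom mobius at *
  simp only [SL2Z.mul_apply, Int.cast_add, Int.cast_mul]
  field_simp
  ring

lemma mobius_mul (A : SL2Z) (hB : mobiusDenom B x ≠ 0) :
    mobius (A * B) x = mobius A (mobius B x) := by
  have hnum : (((A * B) 0 0 : ℤ) : ℝ) * x + (((A * B) 0 1 : ℤ) : ℝ) =
      (((A 0 0 : ℤ) : ℝ) * mobius B x + ((A 0 1 : ℤ) : ℝ)) * mobiusDenom B x := by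
    unfold mobiusDenom mobius at *
    simp only [SL2Z.mul_apply, Int.cast_add, Int.cast_mul]
    field_simp
    ring
  rw [mobius, hnum, ← mobiusDenom, mobiusDenom_mul A hB, mul_div_mul_right _ _ hB]
  rfl

lemma mobiusDenom_inv_mobius (hB : mobiusDenom B x ≠ 0) :
    mobiusDenom B⁻¹ (mobius B x) = (mobiusDenom B x)⁻¹ := by
  have h := mobiusDenom_mul B⁻¹ hB
  rw [inv_mul_cancel, mobiusDenom_one] at h
  exact eq_inv_of_mul_eq_one_left h.symm

lemma mobius_inv_mobius (hB : mobiusDenom B x ≠ 0) : mobius B⁻¹ (mobius B x) = x := by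
  rw [← mobius_mul B⁻¹ hB, inv_mul_cancel]
  simp [mobius]

lemma isFixedPt_iff_mobius_eq (hA : mobiusDenom A x ≠ 0) : IsFixedPt A x ↔ mobius A x = x := by
  unfold mobiusDenom at hA
  rw [IsFixedPt, mobius, div_eq_iff hA, mul_comm x]

lemma IsFixedPt.conj (hA : IsFixedPt A x) (hB : mobiusDenom B x ≠ 0) :
    IsFixedPt (B * A * B⁻¹) (mobius B x) ∧
      mobiusDeriv (B * A * B⁻¹) (mobius B x) = mobiusDeriv A x := by
  have hB' : mobiusDenom B⁻¹ (mobius B x) ≠ 0 := by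
    rw [mobiusDenom_inv_mobius hB]; exact inv_ne_zero hB
  have hAx : mobius A x = x := (isFixedPt_iff_mobius_eq hA.mobiusDenom_ne_zero).mp hA
  have hAB' : mobiusDenom (A * B⁻¹) (mobius B x) ≠ 0 := by
    rw [mobiusDenom_mul A hB', mobius_inv_mobius hB]
    exact mul_ne_zero hA.mobiusDenom_ne_zero hB'
  have hmob : mobius (A * B⁻¹) (mobius B x) = x := by
    rw [mobius_mul A hB', mobius_inv_mobius hB, hAx]
  have hden : mobiusDenom (B * A * B⁻¹) (mobius B x) = mobiusDenom A x := by
    rw [mul_assoc, mobiusDenom_mul B hAB', hmob, mobiusDenom_mul A hB', mobius_inv_mobius hB,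
      mobiusDenom_inv_mobius hB]
    field_simp
  refine ⟨?_, by rw [mobiusDeriv_eq_inv_sq, mobiusDeriv_eq_inv_sq, hden]⟩
  rw [isFixedPt_iff_mobius_eq (hden ▸ hA.mobiusDenom_ne_zero), mul_assoc, mobius_mul B hAB', hmob]

lemma derivSet_mobius (hB : mobiusDefinedAt B x) : derivSet (mobius B x) = derivSet x := by
  have hB' : mobiusDenom B⁻¹ (mobius B x) ≠ 0 := by
    rw [mobiusDenom_inv_mobius hB]; exact inv_ne_zero hB
  apply Subset.antisymm
  · rintro _ ⟨A, hA, rfl⟩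
    obtain ⟨hfix, hderiv⟩ := hA.conj hB'
    rw [inv_inv, mobius_inv_mobius hB] at hfix hderiv
    exact ⟨_, hfix, hderiv⟩
  · rintro _ ⟨A, hA, rfl⟩
    obtain ⟨hfix, hderiv⟩ := hA.conj hB
    exact ⟨_, hfix, hderiv⟩

end Orbit

/-- For `s ∈ P_ℤ` there is `φ_s > 1` such that `A ↦ (c·s + d)⁻²` is a homomorphism from
the stabiliser of `s` in SL(2, ℤ) to the multiplicative group of positive reals, with
kernel `{1, -1}` and image `{φ_s ^ n : n ∈ ℤ}`; moreover `φ` is constant on the orbit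
of `s`. -/
theorem exists_phi_deriv_hom_stabiliser (s : ℝ) (hs : s ∈ PZ) :
    ∃ φ : ℝ, 1 < φ ∧
      (∀ A : SL2Z, IsFixedPt A s → 0 < mobiusDeriv A s) ∧
      (∀ A B : SL2Z, IsFixedPt A s → IsFixedPt B s →
        mobiusDeriv (A * B) s = mobiusDeriv A s * mobiusDeriv B s) ∧
      (∀ A : SL2Z, IsFixedPt A s →
        (mobiusDeriv A s = 1 ↔ A = 1 ∨ (A : Matrix (Fin 2) (Fin 2) ℤ) = -1)) ∧
      {r : ℝ | ∃ A : SL2Z, IsFixedPt A s ∧ mobiusDeriv A s = r} =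
        {r : ℝ | ∃ n : ℤ, r = φ ^ n} ∧
      (∀ B : SL2Z, mobiusDefinedAt B s →
        {r : ℝ | ∃ A : SL2Z, IsFixedPt A (mobius B s) ∧ mobiusDeriv A (mobius B s) = r} =
          {r : ℝ | ∃ n : ℤ, r = φ ^ n}) := by
  obtain ⟨φ, hφ, hderivSet⟩ := exists_derivSet_eq_zpow hs
  refine ⟨φ, hφ, fun A hA => hA.mobiusDeriv_pos,
    fun A B _ hB => mobiusDeriv_mul_of_isFixedPt A hB,
    fun A hA => mobiusDeriv_eq_one_iff (irrational_of_mem_PZ hs) hA, hderivSet,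
    fun B hB => (derivSet_mobius hB).trans hderivSet⟩
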